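/- For every ρ ∈ (−1,1), the bivariate Gaussian copula C_ρ is asymptotically independent in the upper tail: its upper tail dependence coefficient λ_u := lim_{q → 1⁻} (1 − 2q + C_ρ(q,q)) / (1 − q) exists and equals 0. Equivalently, lim_{x → ∞} 2 ( 1 − Φ( x √(1−ρ)/√(1+ρ) ) ) = 0. -/

import Mathlib

/-!
At `q = Φ x` the numerator `1 - 2q + C_ρ(q,q)` is `P(X > x, Y > x)` for a standard bivariate
normal pair `(X, Y)` with correlation `ρ`. Since `2ρst ≤ |ρ| (s² + t²)`, the joint density is
dominated by a multiple of `exp (-(s² + t²) / (2 (1 + |ρ|)))`, so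
`P(X > x, Y > x) = O(exp (-x² / (1 + |ρ|)))`, whereas `1 - Φ x ≥ φ (x + 1)`. As
`1 / (1 + |ρ|) > 1 / 2`, the ratio tends to `0` as `x → ∞`, and `Φ⁻¹ q → ∞` as `q → 1⁻`.
-/

open MeasureTheory Set Filter Topology Real ProbabilityTheory

theorem setIntegral_compl_prod_compl {α β E : Type*} [MeasurableSpace α] [MeasurableSpace β]
    [NormedAddCommGroup E] [NormedSpace ℝ E] {μ : Measure (α × β)} {f : α × β → E}
    (hf : Integrable f μ) {s : Set α} {t : Set β} (hs : MeasurableSet s) (ht : MeasurableSet t) :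
    ∫ z in sᶜ ×ˢ tᶜ, f z ∂μ = ∫ z, f z ∂μ - ∫ z in s ×ˢ univ, f z ∂μ
      - ∫ z in univ ×ˢ t, f z ∂μ + ∫ z in s ×ˢ t, f z ∂μ := by
  have h₁ : sᶜ ×ˢ tᶜ = univ ×ˢ tᶜ \ s ×ˢ tᶜ := by ext; simp; tauto
  have h₂ : (univ : Set α) ×ˢ tᶜ = univ \ univ ×ˢ t := by ext; simp
  have h₃ : s ×ˢ tᶜ = s ×ˢ univ \ s ×ˢ t := by ext; simp; tauto
  rw [h₁, setIntegral_sdiff (hs.prod ht.compl) hf.integrableOn (prod_mono_left (subset_univ s)),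
    h₂, setIntegral_sdiff (MeasurableSet.univ.prod ht) hf.integrableOn (subset_univ _),
    h₃, setIntegral_sdiff (hs.prod ht) hf.integrableOn (prod_mono_right (subset_univ t)),
    setIntegral_univ]
  abel

theorem Monotone.tendsto_atTop_of_eventually_comp_eq {α : Type*} [LinearOrder α] {F : α → ℝ}
    {G : ℝ → α} {c : ℝ} (hF : Monotone F) (hFc : ∀ x, F x < c)
    (hFG : ∀ᶠ q in 𝓝[<] c, F (G q) = q) :
    Tendsto G (𝓝[<] c) atTop := by
  refine tendsto_atTop.2 fun b ↦ ?_
  filter_upwards [hFG, Ioo_mem_nhdsLT (hFc b)] with q hq hqb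
  by_contra! hlt
  exact (hq ▸ hF hlt.le).not_gt hqb.1

lemma tendsto_add_one_sq_div_two_sub_mul_sq {b : ℝ} (hb : 1 / 2 < b) :
    Tendsto (fun x : ℝ ↦ (x + 1) ^ 2 / 2 - b * x ^ 2) atTop atBot := by
  have h : Tendsto (fun x : ℝ ↦ x * ((b - 1 / 2) * x + -1)) atTop atTop :=
    tendsto_id.atTop_mul_atTop₀
      (tendsto_atTop_add_const_right _ _ (tendsto_id.const_mul_atTop (by linarith)))
  refine (tendsto_atBot_add_const_left _ (1 / 2) (tendsto_neg_atTop_atBot.comp h)).congr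
    fun x ↦ ?_
  simp only [Function.comp_apply]
  ring

lemma setIntegral_Ioi_exp_neg_mul_sq_le {a x : ℝ} (ha : 0 < a) (hx : 0 ≤ x) :
    ∫ t in Ioi x, rexp (-a * t ^ 2) ≤ √(π / a) * rexp (-a * x ^ 2) := by
  have hg : Integrable (fun t ↦ rexp (-a * x ^ 2) * rexp (-a * (t - x) ^ 2)) :=
    ((integrable_exp_neg_mul_sq ha).comp_sub_right x).const_mul _
  calc ∫ t in Ioi x, rexp (-a * t ^ 2)
      ≤ ∫ t in Ioi x, rexp (-a * x ^ 2) * rexp (-a * (t - x) ^ 2) := by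
        refine setIntegral_mono_on (integrable_exp_neg_mul_sq ha).integrableOn hg.integrableOn
          measurableSet_Ioi fun t ht ↦ ?_
        rw [← exp_add, exp_le_exp]
        nlinarith [mul_nonneg hx (sub_nonneg.2 (le_of_lt (mem_Ioi.1 ht)))]
    _ ≤ ∫ t, rexp (-a * x ^ 2) * rexp (-a * (t - x) ^ 2) :=
        setIntegral_le_integral hg (ae_of_all _ fun t ↦ by positivity)
    _ = √(π / a) * rexp (-a * x ^ 2) := by
        rw [integral_const_mul, integral_sub_right_eq_self (fun t ↦ rexp (-a * t ^ 2)),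
          integral_gaussian, mul_comm]

lemma integrable_exp_neg_mul_sq_mul_exp_neg_mul_sq {a : ℝ} (ha : 0 < a) :
    Integrable fun p : ℝ × ℝ ↦ rexp (-a * p.1 ^ 2) * rexp (-a * p.2 ^ 2) := by
  rw [Measure.volume_eq_prod]
  exact (integrable_exp_neg_mul_sq ha).mul_prod (integrable_exp_neg_mul_sq ha)

lemma setIntegral_Ioi_prod_Ioi_le_of_le {f : ℝ × ℝ → ℝ} {a K x : ℝ} (ha : 0 < a) (hK : 0 ≤ K)
    (hx : 0 ≤ x) (hf : Integrable f)
    (hle : ∀ p, f p ≤ K * (rexp (-a * p.1 ^ 2) * rexp (-a * p.2 ^ 2))) :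
    ∫ p in Ioi x ×ˢ Ioi x, f p ≤ K * (π / a) * rexp (-(2 * a) * x ^ 2) := by
  have hg := (integrable_exp_neg_mul_sq_mul_exp_neg_mul_sq ha).const_mul K
  calc ∫ p in Ioi x ×ˢ Ioi x, f p
      ≤ ∫ p in Ioi x ×ˢ Ioi x, K * (rexp (-a * p.1 ^ 2) * rexp (-a * p.2 ^ 2)) :=
        setIntegral_mono_on hf.integrableOn hg.integrableOn
          (measurableSet_Ioi.prod measurableSet_Ioi) fun p _ ↦ hle p
    _ = K * (∫ t in Ioi x, rexp (-a * t ^ 2)) ^ 2 := by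
        rw [integral_const_mul, Measure.volume_eq_prod,
          setIntegral_prod_mul (fun t ↦ rexp (-a * t ^ 2)) (fun t ↦ rexp (-a * t ^ 2)), sq]
    _ ≤ K * (√(π / a) * rexp (-a * x ^ 2)) ^ 2 := by
        gcongr
        exact setIntegral_Ioi_exp_neg_mul_sq_le ha hx
    _ = K * (π / a) * rexp (-(2 * a) * x ^ 2) := by
        rw [mul_pow, sq_sqrt (by positivity), sq, ← exp_add]
        ring_nf

lemma gaussianPDFReal_zero_one (t : ℝ) :
    gaussianPDFReal 0 1 t = (√(2 * π))⁻¹ * rexp (-(t ^ 2) / 2) := by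
  simp [gaussianPDFReal]

lemma cdf_gaussianReal_zero_one (x : ℝ) :
    cdf (gaussianReal 0 1) x = ∫ t in Iic x, gaussianPDFReal 0 1 t := by
  rw [cdf_eq_real, measureReal_def, gaussianReal_apply_eq_integral _ one_ne_zero,
    ENNReal.toReal_ofReal
      (setIntegral_nonneg measurableSet_Iic fun t _ ↦ gaussianPDFReal_nonneg _ _ _)]

lemma one_sub_cdf_gaussianReal_zero_one (x : ℝ) :
    1 - cdf (gaussianReal 0 1) x = ∫ t in Ioi x, gaussianPDFReal 0 1 t := by
  rw [← compl_Iic, setIntegral_compl measurableSet_Iic (integrable_gaussianPDFReal 0 1),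
    integral_gaussianPDFReal_eq_one 0 one_ne_zero, cdf_gaussianReal_zero_one]

lemma cdf_gaussianReal_lt_one (x : ℝ) : cdf (gaussianReal 0 1) x < 1 := by
  rw [← sub_pos, one_sub_cdf_gaussianReal_zero_one,
    setIntegral_pos_iff_support_of_nonneg_ae (ae_of_all _ (gaussianPDFReal_nonneg 0 1))
      (integrable_gaussianPDFReal 0 1).integrableOn]
  simp [Function.support, (gaussianPDFReal_pos 0 1 _ one_ne_zero).ne']

lemma gaussianPDFReal_add_one_le_setIntegral_Ioi {x : ℝ} (hx : 0 ≤ x) :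
    gaussianPDFReal 0 1 (x + 1) ≤ ∫ t in Ioi x, gaussianPDFReal 0 1 t := by
  have hφ := integrable_gaussianPDFReal 0 1
  calc gaussianPDFReal 0 1 (x + 1)
      = volume.real (Ioc x (x + 1)) • gaussianPDFReal 0 1 (x + 1) := by simp
    _ ≤ ∫ t in Ioc x (x + 1), gaussianPDFReal 0 1 t := by
        refine setIntegral_ge_of_const_le measurableSet_Ioc (by simp) (fun t ht ↦ ?_)
          hφ.integrableOn
        simp only [gaussianPDFReal_zero_one]
        gcongr
        exacts [hx.trans ht.1.le, ht.2]
    _ ≤ ∫ t in Ioi x, gaussianPDFReal 0 1 t :=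
        setIntegral_mono_set hφ.integrableOn (ae_of_all _ (gaussianPDFReal_nonneg 0 1))
          Ioc_subset_Ioi_self.eventuallyLE

noncomputable def bivariateGaussianPDFReal (ρ : ℝ) (p : ℝ × ℝ) : ℝ :=
  (2 * π * √(1 - ρ ^ 2))⁻¹ * rexp ((2 * ρ * p.1 * p.2 - p.1 ^ 2 - p.2 ^ 2) / (2 * (1 - ρ ^ 2)))

section BivariateGaussian

variable {ρ : ℝ}

lemma bivariateGaussianPDFReal_swap (p : ℝ × ℝ) :
    bivariateGaussianPDFReal ρ p.swap = bivariateGaussianPDFReal ρ p := by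
  simp only [bivariateGaussianPDFReal, Prod.fst_swap, Prod.snd_swap]
  ring_nf

lemma bivariateGaussianPDFReal_eq_mul (hρ : ρ ^ 2 < 1) (s t : ℝ) :
    bivariateGaussianPDFReal ρ (s, t) =
      gaussianPDFReal 0 1 s * gaussianPDFReal (ρ * s) (1 - ρ ^ 2).toNNReal t := by
  have hσ : 0 < 1 - ρ ^ 2 := by linarith
  have hsqrt : √(2 * π * (1 - ρ ^ 2)) = √(2 * π) * √(1 - ρ ^ 2) := sqrt_mul (by positivity) _
  have h2π : √(2 * π) * √(2 * π) = 2 * π := mul_self_sqrt (by positivity)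
  rw [bivariateGaussianPDFReal, gaussianPDFReal, gaussianPDFReal, Real.coe_toNNReal _ hσ.le,
    NNReal.coe_one, mul_one, hsqrt, mul_mul_mul_comm, ← exp_add, ← mul_inv, ← mul_assoc, h2π]
  congr 2
  field_simp
  ring

lemma bivariateGaussianPDFReal_nonneg (hρ : ρ ^ 2 < 1) (p : ℝ × ℝ) :
    0 ≤ bivariateGaussianPDFReal ρ p := by
  rw [← p.eta, bivariateGaussianPDFReal_eq_mul hρ]
  exact mul_nonneg (gaussianPDFReal_nonneg _ _ _) (gaussianPDFReal_nonneg _ _ _)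

lemma integral_bivariateGaussianPDFReal_snd (hρ : ρ ^ 2 < 1) (s : ℝ) :
    ∫ t, bivariateGaussianPDFReal ρ (s, t) = gaussianPDFReal 0 1 s := by
  have hσ : (1 - ρ ^ 2).toNNReal ≠ 0 := by simpa using hρ
  simp_rw [bivariateGaussianPDFReal_eq_mul hρ]
  rw [integral_const_mul, integral_gaussianPDFReal_eq_one _ hσ, mul_one]

lemma integral_bivariateGaussianPDFReal_fst (hρ : ρ ^ 2 < 1) (t : ℝ) :
    ∫ s, bivariateGaussianPDFReal ρ (s, t) = gaussianPDFReal 0 1 t := by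
  rw [← integral_bivariateGaussianPDFReal_snd hρ t]
  exact integral_congr_ae (ae_of_all _ fun s ↦ bivariateGaussianPDFReal_swap (t, s))

lemma bivariateGaussianPDFReal_le_mul_exp (hρ : ρ ^ 2 < 1) (p : ℝ × ℝ) :
    bivariateGaussianPDFReal ρ p ≤ (2 * π * √(1 - ρ ^ 2))⁻¹ *
      (rexp (-(2 * (1 + |ρ|))⁻¹ * p.1 ^ 2) * rexp (-(2 * (1 + |ρ|))⁻¹ * p.2 ^ 2)) := by
  have hρ' : |ρ| < 1 := by rw [← sq_lt_one_iff_abs_lt_one]; exact hρ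
  have hfac : 1 - ρ ^ 2 = (1 - |ρ|) * (1 + |ρ|) := by rw [← sq_abs ρ]; ring
  have hcross : 2 * ρ * p.1 * p.2 ≤ |ρ| * (p.1 ^ 2 + p.2 ^ 2) := by
    nlinarith [neg_abs_le ρ, le_abs_self ρ, sq_nonneg (p.1 - p.2), sq_nonneg (p.1 + p.2),
      abs_nonneg ρ]
  rw [bivariateGaussianPDFReal, ← exp_add]
  gcongr
  rw [div_le_iff₀ (by positivity), hfac]
  have h1 : 0 < 1 + |ρ| := by positivity
  have h2 : 0 < 1 - |ρ| := by linarith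
  field_simp
  nlinarith

lemma integrable_bivariateGaussianPDFReal (hρ : ρ ^ 2 < 1) :
    Integrable (bivariateGaussianPDFReal ρ) := by
  refine Integrable.mono' ((integrable_exp_neg_mul_sq_mul_exp_neg_mul_sq
    (by positivity : 0 < (2 * (1 + |ρ|))⁻¹)).const_mul (2 * π * √(1 - ρ ^ 2))⁻¹)
    (by unfold bivariateGaussianPDFReal; fun_prop :
      Continuous (bivariateGaussianPDFReal ρ)).aestronglyMeasurable
    (ae_of_all _ fun p ↦ ?_)
  rw [norm_of_nonneg (bivariateGaussianPDFReal_nonneg hρ p)]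
  exact bivariateGaussianPDFReal_le_mul_exp hρ p

lemma setIntegral_bivariateGaussianPDFReal_prod_univ (hρ : ρ ^ 2 < 1) (s : Set ℝ) :
    ∫ p in s ×ˢ univ, bivariateGaussianPDFReal ρ p = ∫ t in s, gaussianPDFReal 0 1 t := by
  rw [Measure.volume_eq_prod,
    setIntegral_prod _ (integrable_bivariateGaussianPDFReal hρ).integrableOn]
  simp_rw [Measure.restrict_univ, integral_bivariateGaussianPDFReal_snd hρ]

lemma setIntegral_bivariateGaussianPDFReal_univ_prod (hρ : ρ ^ 2 < 1) (t : Set ℝ) :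
    ∫ p in univ ×ˢ t, bivariateGaussianPDFReal ρ p = ∫ s in t, gaussianPDFReal 0 1 s := by
  rw [Measure.volume_eq_prod, ← Measure.prod_restrict, integral_prod_symm _
    (by rw [Measure.prod_restrict]; exact (integrable_bivariateGaussianPDFReal hρ).integrableOn)]
  simp_rw [Measure.restrict_univ, integral_bivariateGaussianPDFReal_fst hρ]

lemma setIntegral_bivariateGaussianPDFReal_Ioi_prod_Ioi (hρ : ρ ^ 2 < 1) (x y : ℝ) :
    ∫ p in Ioi x ×ˢ Ioi y, bivariateGaussianPDFReal ρ p =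
      1 - cdf (gaussianReal 0 1) x - cdf (gaussianReal 0 1) y
        + ∫ p in Iic x ×ˢ Iic y, bivariateGaussianPDFReal ρ p := by
  have htotal : ∫ p, bivariateGaussianPDFReal ρ p = 1 := by
    simpa [integral_gaussianPDFReal_eq_one] using
      setIntegral_bivariateGaussianPDFReal_prod_univ hρ univ
  rw [← compl_Iic, ← compl_Iic, setIntegral_compl_prod_compl
    (integrable_bivariateGaussianPDFReal hρ) measurableSet_Iic measurableSet_Iic, htotal,
    setIntegral_bivariateGaussianPDFReal_prod_univ hρ,
    setIntegral_bivariateGaussianPDFReal_univ_prod hρ, cdf_gaussianReal_zero_one,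
    cdf_gaussianReal_zero_one]

theorem tendsto_setIntegral_bivariateGaussianPDFReal_Ioi_prod_Ioi_div (hρ : ρ ^ 2 < 1) :
    Tendsto (fun x ↦ (∫ p in Ioi x ×ˢ Ioi x, bivariateGaussianPDFReal ρ p) /
      ∫ t in Ioi x, gaussianPDFReal 0 1 t) atTop (𝓝 0) := by
  set a := (2 * (1 + |ρ|))⁻¹
  set K := (2 * π * √(1 - ρ ^ 2))⁻¹
  have ha : 0 < a := by positivity
  have hb : 1 / 2 < 2 * a := by
    have : |ρ| < 1 := by rw [← sq_lt_one_iff_abs_lt_one]; exact hρ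
    rw [lt_mul_inv_iff₀ (by positivity)]
    linarith
  have hlim := (tendsto_exp_atBot.comp (tendsto_add_one_sq_div_two_sub_mul_sq hb)).const_mul
    (K * (π / a) * √(2 * π))
  rw [mul_zero] at hlim
  refine tendsto_of_tendsto_of_tendsto_of_le_of_le' tendsto_const_nhds hlim
    (Eventually.of_forall fun x ↦ div_nonneg
      (setIntegral_nonneg (measurableSet_Ioi.prod measurableSet_Ioi)
        fun p _ ↦ bivariateGaussianPDFReal_nonneg hρ p)
      (setIntegral_nonneg measurableSet_Ioi fun t _ ↦ gaussianPDFReal_nonneg 0 1 t)) ?_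
  filter_upwards [eventually_ge_atTop 0] with x hx
  have hnum := setIntegral_Ioi_prod_Ioi_le_of_le ha (by positivity) hx
    (integrable_bivariateGaussianPDFReal hρ) (bivariateGaussianPDFReal_le_mul_exp hρ)
  have hden := gaussianPDFReal_add_one_le_setIntegral_Ioi hx
  rw [gaussianPDFReal_zero_one] at hden
  calc (∫ p in Ioi x ×ˢ Ioi x, bivariateGaussianPDFReal ρ p) /
        ∫ t in Ioi x, gaussianPDFReal 0 1 t
      ≤ K * (π / a) * rexp (-(2 * a) * x ^ 2) / ((√(2 * π))⁻¹ * rexp (-((x + 1) ^ 2) / 2)) :=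
        div_le_div₀ (by positivity) hnum (by positivity) hden
    _ = K * (π / a) * √(2 * π) * rexp ((x + 1) ^ 2 / 2 - 2 * a * x ^ 2) := by
        rw [sub_eq_neg_add, exp_add, neg_div, exp_neg, ← neg_mul]
        field_simp

end BivariateGaussian

theorem gaussian_copula_no_upper_tail_dependence_general
    (ρ : ℝ) (hρ : ρ ∈ Ioo (-1:ℝ) 1)
    (Φ Φinv : ℝ → ℝ) (Φ₂ : ℝ → ℝ → ℝ)
    -- standard normal distribution function and its inverse on (0,1)
    (hΦ : ∀ x, Φ x = ∫ t in Iic x,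
        (Real.sqrt (2 * Real.pi))⁻¹ * Real.exp (-(t ^ 2) / 2))
    (hΦinv_right : ∀ p ∈ Ioo (0:ℝ) 1, Φ (Φinv p) = p)
    -- bivariate standard normal distribution function with correlation ρ
    (hΦ₂ : ∀ x y, Φ₂ x y =
        ∫ p in Iic x ×ˢ Iic y,
          (2 * Real.pi * Real.sqrt (1 - ρ ^ 2))⁻¹ *
            Real.exp ((2 * ρ * p.1 * p.2 - p.1 ^ 2 - p.2 ^ 2) / (2 * (1 - ρ ^ 2)))) :
    -- upper tail dependence coefficient of C_ρ(u,v) = Φ₂(Φ⁻¹(u), Φ⁻¹(v)) is 0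
    Tendsto (fun q : ℝ => (1 - 2 * q + Φ₂ (Φinv q) (Φinv q)) / (1 - q))
        (nhdsWithin 1 (Iio 1)) (nhds 0) ∧
    -- equivalently
    Tendsto (fun x : ℝ =>
        2 * (1 - Φ (x * Real.sqrt (1 - ρ) / Real.sqrt (1 + ρ))))
        atTop (nhds 0) := by
  obtain ⟨hρ₁, hρ₂⟩ := hρ
  have hρ : ρ ^ 2 < 1 := by nlinarith
  have hΦ₂ : ∀ x y, Φ₂ x y = ∫ p in Iic x ×ˢ Iic y, bivariateGaussianPDFReal ρ p := hΦ₂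
  obtain rfl : Φ = cdf (gaussianReal 0 1) := funext fun x ↦ by
    simp_rw [hΦ, cdf_gaussianReal_zero_one, gaussianPDFReal_zero_one]
  constructor
  · have hΦinv : Tendsto Φinv (𝓝[<] 1) atTop :=
      (cdf _).mono.tendsto_atTop_of_eventually_comp_eq cdf_gaussianReal_lt_one
        (mem_of_superset (Ioo_mem_nhdsLT zero_lt_one) hΦinv_right)
    refine ((tendsto_setIntegral_bivariateGaussianPDFReal_Ioi_prod_Ioi_div hρ).comp hΦinv).congr' ?_
    filter_upwards [Ioo_mem_nhdsLT zero_lt_one] with q hq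
    rw [Function.comp_apply, setIntegral_bivariateGaussianPDFReal_Ioi_prod_Ioi hρ,
      ← one_sub_cdf_gaussianReal_zero_one, ← hΦ₂, hΦinv_right q hq]
    ring
  · have hscale : Tendsto (fun x ↦ x * √(1 - ρ) / √(1 + ρ)) atTop atTop := by
      simpa only [id, mul_div_assoc] using
        tendsto_id.atTop_mul_const (div_pos (sqrt_pos.2 (by linarith)) (sqrt_pos.2 (by linarith)))
    simpa using (((tendsto_cdf_atTop _).comp hscale).const_sub 1).const_mul 2

/-- the bivariate Gaussian copula with `ρ ∈ (−1,1)` is asymptotically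
independent in the upper tail: `λ_u = lim_{q→1⁻} (1 − 2q + C_ρ(q,q))/(1 − q) = 0`;
equivalently `lim_{x→∞} 2(1 − Φ(x√(1−ρ)/√(1+ρ))) = 0`. -/
theorem gaussian_copula_no_upper_tail_dependence
    (ρ : ℝ) (hρ : ρ ∈ Ioo (-1:ℝ) 1)
    (Φ Φinv : ℝ → ℝ) (Φ₂ : ℝ → ℝ → ℝ)
    -- standard normal distribution function and its inverse on (0,1)
    (hΦ : ∀ x, Φ x = ∫ t in Iic x,
        (Real.sqrt (2 * Real.pi))⁻¹ * Real.exp (-(t ^ 2) / 2))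
    (hΦinv_left : ∀ x, Φinv (Φ x) = x)
    (hΦinv_right : ∀ p ∈ Ioo (0:ℝ) 1, Φ (Φinv p) = p)
    -- bivariate standard normal distribution function with correlation ρ
    (hΦ₂ : ∀ x y, Φ₂ x y =
        ∫ p in Iic x ×ˢ Iic y,
          (2 * Real.pi * Real.sqrt (1 - ρ ^ 2))⁻¹ *
            Real.exp ((2 * ρ * p.1 * p.2 - p.1 ^ 2 - p.2 ^ 2) / (2 * (1 - ρ ^ 2)))) :
    -- upper tail dependence coefficient of C_ρ(u,v) = Φ₂(Φ⁻¹(u), Φ⁻¹(v)) is 0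
    Tendsto (fun q : ℝ => (1 - 2 * q + Φ₂ (Φinv q) (Φinv q)) / (1 - q))
        (nhdsWithin 1 (Iio 1)) (nhds 0) ∧
    -- equivalently
    Tendsto (fun x : ℝ =>
        2 * (1 - Φ (x * Real.sqrt (1 - ρ) / Real.sqrt (1 + ρ))))
        atTop (nhds 0) :=
  gaussian_copula_no_upper_tail_dependence_general ρ hρ Φ Φinv Φ₂ hΦ hΦinv_right hΦ₂
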